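/- Let α ∈ (0,1) and λ ≥ 0. Suppose c ≡ 0 in the operator ℒ, f satisfies assumption A1 with constant λ, and in addition there are constants σ₁ ≤ 0 ≤ σ₂ with f(x, t, σ₁) ≤ 0 and f(x, t, σ₂) ≥ 0 for all (x,t) ∈ Ω̄ × (0,T]. Let the temporal mesh satisfy λ τ_j^α < 1/Γ(2−α) for all j, let h = 1/N satisfy the discrete maximum principle condition, and let σ₁ ≤ u₀(x) ≤ σ₂ for all x ∈ Ω̄. Then the unique solution (U^m)_{m=0}^M of the finite difference scheme satisfies σ₁ ≤ U^m(z) ≤ σ₂ for all z ∈ Ω̄_h and all m = 0,…,M. -/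

import Mathlib

open Real MeasureTheory

/-- The L1 discrete Caputo operator of order `α` on the temporal mesh `t`. -/
noncomputable def deltaL1 (α : ℝ) (t : ℕ → ℝ) (V : ℕ → ℝ) (m : ℕ) : ℝ :=
  (1 / Real.Gamma (1 - α)) *
    ∑ j ∈ Finset.Icc 1 m,
      ((V j - V (j - 1)) / (t j - t (j - 1))) *
        ∫ s in (t (j - 1))..(t j), (t m - s) ^ (-α)

/-- The closed unit cube `Ω̄ = [0,1]^d`. -/
def cube (d : ℕ) : Set (Fin d → ℝ) := {x | ∀ k, x k ∈ Set.Icc (0 : ℝ) 1}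

/-- The open unit cube `Ω = (0,1)^d`. -/
def openCube (d : ℕ) : Set (Fin d → ℝ) := {x | ∀ k, x k ∈ Set.Ioo (0 : ℝ) 1}

/-- Classical partial derivative in the `k`-th coordinate. -/
noncomputable def pder {d : ℕ} (k : Fin d) (g : (Fin d → ℝ) → ℝ)
    (x : Fin d → ℝ) : ℝ :=
  deriv (fun s => g (Function.update x k s)) (x k)

/-- The second-order elliptic operator
`ℒu = Σ_k ( −∂_{x_k}(a_k ∂_{x_k} u) + b_k ∂_{x_k} u ) + c·u`. -/
noncomputable def Lop {d : ℕ} (a b : Fin d → (Fin d → ℝ) → ℝ → ℝ)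
    (c : (Fin d → ℝ) → ℝ → ℝ) (u : (Fin d → ℝ) → ℝ → ℝ)
    (x : Fin d → ℝ) (tt : ℝ) : ℝ :=
  (∑ k, (-(pder k (fun y => a k y tt * pder k (fun z => u z tt) y) x)
      + b k x tt * pder k (fun z => u z tt) x))
    + c x tt * u x tt

/-- The Caputo fractional derivative in time of order `α`. -/
noncomputable def caputo (α : ℝ) (g : ℝ → ℝ) (t : ℝ) : ℝ :=
  (1 / Real.Gamma (1 - α)) * ∫ s in (0 : ℝ)..t, (t - s) ^ (-α) * deriv g s

/-- Coordinates of the grid node with multi-index `i` (mesh size `h = 1/N`). -/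
noncomputable def gridPt (d N : ℕ) (i : Fin d → ℕ) : Fin d → ℝ :=
  fun k => (i k : ℝ) / N

/-- The standard finite difference spatial operator `ℒ_h` at time `tm`. -/
noncomputable def Lh (d N : ℕ) (a b : Fin d → (Fin d → ℝ) → ℝ → ℝ)
    (c : (Fin d → ℝ) → ℝ → ℝ) (tm : ℝ) (V : (Fin d → ℕ) → ℝ)
    (i : Fin d → ℕ) : ℝ :=
  let h : ℝ := 1 / N
  let x : Fin d → ℝ := gridPt d N i
  (∑ k, (1 / h ^ 2) *
      (a k (Function.update x k (x k + h / 2)) tm *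
          (V i - V (Function.update i k (i k + 1)))
        + a k (Function.update x k (x k - h / 2)) tm *
          (V i - V (Function.update i k (i k - 1)))))
    + (∑ k, (1 / (2 * h)) * b k x tm *
        (V (Function.update i k (i k + 1)) - V (Function.update i k (i k - 1))))
    + c x tm * V i

/-- The finite difference scheme: L1 in time, standard finite differences in
space, homogeneous Dirichlet boundary conditions and initial condition `u₀`. -/
def FDScheme (α : ℝ) (d N M : ℕ) (t : ℕ → ℝ)
    (a b : Fin d → (Fin d → ℝ) → ℝ → ℝ) (c : (Fin d → ℝ) → ℝ → ℝ)
    (f : (Fin d → ℝ) → ℝ → ℝ → ℝ) (u₀ : (Fin d → ℝ) → ℝ)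
    (U : ℕ → (Fin d → ℕ) → ℝ) : Prop :=
  (∀ i : Fin d → ℕ, (∀ k, i k ≤ N) → U 0 i = u₀ (gridPt d N i)) ∧
  (∀ m, 1 ≤ m → m ≤ M → ∀ i : Fin d → ℕ, (∀ k, i k ≤ N) →
    (∃ k, i k = 0 ∨ i k = N) → U m i = 0) ∧
  (∀ m, 1 ≤ m → m ≤ M → ∀ i : Fin d → ℕ,
    (∀ k, 1 ≤ i k ∧ i k ≤ N - 1) →
    deltaL1 α t (fun j => U j i) m + Lh d N a b c (t m) (U m) i
      + f (gridPt d N i) (t m) (U m i) = 0)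

/-!
The L1 operator is `δ_t^α V^m = Σ_j w_{m,j} (V^j - V^{j-1})` with weights that are positive and
nondecreasing in `j` (concavity of `s ↦ s ^ (1 - α)`), so Abel summation gives
`δ_t^α V^m ≥ w_{m,m} (V^m - σ)` as soon as `V^j ≤ σ` for `j < m`; the mesh condition says exactly
`w_{m,m} > λ`. If `U^m` exceeded `σ₂`, a maximising node would be interior (boundary values are
`0 ≤ σ₂`), `ℒ_h U^m ≥ 0` there by the cell-Péclet condition, and A1 together with `f(·, σ₂) ≥ 0`
gives `f(U^m) ≥ -λ (U^m - σ₂)`, so the left side of the scheme equation would be positive.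
The lower bound is the upper bound for `-U`, which solves the scheme with `-f(x, t, -s)`.
-/

open Finset

noncomputable def l1Weight (α : ℝ) (t : ℕ → ℝ) (m j : ℕ) : ℝ :=
  ((t m - t (j - 1)) ^ (1 - α) - (t m - t j) ^ (1 - α)) /
    ((t j - t (j - 1)) * Real.Gamma (2 - α))

lemma integral_sub_rpow_neg {α : ℝ} (hα : α < 1) (u v w : ℝ) :
    ∫ s in u..v, (w - s) ^ (-α) = ((w - u) ^ (1 - α) - (w - v) ^ (1 - α)) / (1 - α) := by
  rw [intervalIntegral.integral_comp_sub_left (fun x : ℝ => x ^ (-α)) w,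
    integral_rpow (Or.inl (by linarith)), neg_add_eq_sub]

lemma deltaL1_eq_sum_l1Weight {α : ℝ} (hα : α < 1) (t V : ℕ → ℝ) (m : ℕ) :
    deltaL1 α t V m = ∑ j ∈ Icc 1 m, l1Weight α t m j * (V j - V (j - 1)) := by
  have hΓ : Real.Gamma (2 - α) = (1 - α) * Real.Gamma (1 - α) := by
    rw [show 2 - α = (1 - α) + 1 by ring, Real.Gamma_add_one (by linarith)]
  simp only [deltaL1, l1Weight, integral_sub_rpow_neg hα, hΓ, mul_sum]
  refine sum_congr rfl fun j _ => ?_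
  simp only [div_eq_mul_inv, mul_inv]
  ring

lemma l1Weight_pos {α : ℝ} (hα : α < 1) {t : ℕ → ℝ} {m j : ℕ}
    (hj : t (j - 1) < t j) (hjm : t j ≤ t m) : 0 < l1Weight α t m j := by
  have hpow : (t m - t j) ^ (1 - α) < (t m - t (j - 1)) ^ (1 - α) :=
    Real.rpow_lt_rpow (by linarith) (by linarith) (by linarith)
  exact div_pos (by linarith) (mul_pos (by linarith) (Real.Gamma_pos_of_pos (by linarith)))

lemma l1Weight_le_succ {α : ℝ} (hα : α ∈ Set.Ioo 0 1) {t : ℕ → ℝ} {m j : ℕ}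
    (hj : t (j - 1) < t j) (hj' : t j < t (j + 1)) (hjm : t (j + 1) ≤ t m) :
    l1Weight α t m j ≤ l1Weight α t m (j + 1) := by
  have hslope := (Real.concaveOn_rpow (p := 1 - α) (by linarith [hα.2])
    (by linarith [hα.1])).slope_anti_adjacent (x := t m - t (j + 1)) (z := t m - t (j - 1))
    (Set.mem_Ici.2 (by linarith)) (Set.mem_Ici.2 (by linarith))
    (show t m - t (j + 1) < t m - t j by linarith) (show t m - t j < t m - t (j - 1) by linarith)
  have hΓ : 0 < Real.Gamma (2 - α) := Real.Gamma_pos_of_pos (by linarith [hα.2])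
  simp only [l1Weight, Nat.add_sub_cancel, ← div_div]
  refine div_le_div_of_nonneg_right ?_ hΓ.le
  convert hslope using 2 <;> ring

lemma lt_l1Weight_self {α lam : ℝ} (hα : α < 1) {t : ℕ → ℝ} {m : ℕ} (hm : t (m - 1) < t m)
    (hlam : lam * (t m - t (m - 1)) ^ α < 1 / Real.Gamma (2 - α)) :
    lam < l1Weight α t m m := by
  have hτ : 0 < t m - t (m - 1) := by linarith
  have hΓ : 0 < Real.Gamma (2 - α) := Real.Gamma_pos_of_pos (by linarith)
  have hweight : l1Weight α t m m = 1 / ((t m - t (m - 1)) ^ α * Real.Gamma (2 - α)) := by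
    rw [l1Weight, sub_self, Real.zero_rpow (by linarith), sub_zero, Real.rpow_sub hτ,
      Real.rpow_one]
    field_simp
  rw [lt_div_iff₀ hΓ] at hlam
  rw [hweight, lt_div_iff₀ (mul_pos (Real.rpow_pos_of_pos hτ α) hΓ)]
  linarith

lemma mul_le_sum_Icc_mul_sub {w W : ℕ → ℝ} {m : ℕ} (hm : 1 ≤ m) (hw₁ : 0 ≤ w 1)
    (hw : ∀ j, 1 ≤ j → j < m → w j ≤ w (j + 1)) (hW : ∀ j < m, W j ≤ 0) :
    w m * W m ≤ ∑ j ∈ Icc 1 m, w j * (W j - W (j - 1)) := by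
  induction m, hm using Nat.le_induction with
  | base =>
    simp only [Icc_self, sum_singleton, Nat.sub_self]
    nlinarith [hW 0 one_pos]
  | succ m hm ih =>
    rw [sum_Icc_succ_top (by omega), Nat.add_sub_cancel]
    have hsum := ih (fun j hj hjm => hw j hj (by omega)) (fun j hj => hW j (by omega))
    nlinarith [hw m hm (by omega), hW m (by omega)]

lemma l1Weight_mul_sub_le_deltaL1 {α c : ℝ} (hα : α ∈ Set.Ioo 0 1) {t V : ℕ → ℝ} {m : ℕ}
    (hm : 1 ≤ m) (ht : StrictMonoOn t (Set.Iic m)) (hV : ∀ j < m, V j ≤ c) :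
    l1Weight α t m m * (V m - c) ≤ deltaL1 α t V m := by
  have ht' : ∀ {i j}, i < j → j ≤ m → t i < t j := fun hij hj =>
    ht (Set.mem_Iic.2 (by omega)) (Set.mem_Iic.2 hj) hij
  have hle : ∀ {j}, j ≤ m → t j ≤ t m := fun hj =>
    ht.monotoneOn (Set.mem_Iic.2 hj) (Set.mem_Iic.2 le_rfl) hj
  have hw : ∀ j, 1 ≤ j → j < m → l1Weight α t m j ≤ l1Weight α t m (j + 1) := fun j hj hjm =>
    l1Weight_le_succ hα (ht' (by omega) (by omega)) (ht' (by omega) (by omega)) (hle hjm)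
  rw [deltaL1_eq_sum_l1Weight hα.2]
  calc l1Weight α t m m * (V m - c)
      ≤ ∑ j ∈ Icc 1 m, l1Weight α t m j * ((V j - c) - (V (j - 1) - c)) :=
        mul_le_sum_Icc_mul_sub hm (l1Weight_pos hα.2 (ht' (by omega) hm) (hle hm)).le hw
          (fun j hj => sub_nonpos.2 (hV j hj))
    _ = _ := sum_congr rfl fun j _ => by ring

lemma update_mem_cube {d : ℕ} {x : Fin d → ℝ} (hx : x ∈ cube d) (k : Fin d) {s : ℝ}
    (hs : s ∈ Set.Icc 0 1) : Function.update x k s ∈ cube d := by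
  intro k'
  rcases eq_or_ne k' k with rfl | hne
  · rwa [Function.update_self]
  · rw [Function.update_of_ne hne]
    exact hx k'

lemma gridPt_mem_cube {d N : ℕ} {i : Fin d → ℕ} (hi : ∀ k, i k ≤ N) :
    gridPt d N i ∈ cube d := fun k =>
  ⟨div_nonneg (Nat.cast_nonneg _) (Nat.cast_nonneg _),
    div_le_one_of_le₀ (by exact_mod_cast hi k) (Nat.cast_nonneg N)⟩

lemma div_add_half_mem_Icc {i N : ℕ} (hi : i + 1 ≤ N) :
    (i : ℝ) / N + 1 / N / 2 ∈ Set.Icc 0 1 := by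
  have hN : (0 : ℝ) < N := by exact_mod_cast (show 0 < N by omega)
  have hi' : (i : ℝ) + 1 ≤ N := by exact_mod_cast hi
  rw [show (i : ℝ) / N + 1 / N / 2 = (i + 1 / 2) / N by ring]
  exact ⟨by positivity, (div_le_one hN).2 (by linarith)⟩

lemma div_sub_half_mem_Icc {i N : ℕ} (hi₁ : 1 ≤ i) (hi : i ≤ N) :
    (i : ℝ) / N - 1 / N / 2 ∈ Set.Icc 0 1 := by
  have hN : (0 : ℝ) < N := by exact_mod_cast (show 0 < N by omega)
  have hi₁' : (1 : ℝ) ≤ i := by exact_mod_cast hi₁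
  have hi' : (i : ℝ) ≤ N := by exact_mod_cast hi
  rw [show (i : ℝ) / N - 1 / N / 2 = (i - 1 / 2) / N by ring]
  exact ⟨div_nonneg (by linarith) hN.le, (div_le_one hN).2 (by linarith)⟩

/-- One direction of `ℒ_h` at a discrete maximum, with `n = 1 / h` and `p`, `q` the drops to
the two neighbours. -/
lemma stencil_nonneg {n A₁ A₂ B p q : ℝ} (hn : 0 ≤ n) (hA₁ : |B| ≤ 2 * n * A₁)
    (hA₂ : |B| ≤ 2 * n * A₂) (hp : 0 ≤ p) (hq : 0 ≤ q) :
    0 ≤ 1 / (1 / n) ^ 2 * (A₁ * p + A₂ * q) + 1 / (2 * (1 / n)) * B * (q - p) := by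
  have h₁ : 0 ≤ 2 * n * A₁ - B := by linarith [le_abs_self B]
  have h₂ : 0 ≤ 2 * n * A₂ + B := by linarith [neg_abs_le B]
  have hrw : 1 / (1 / n) ^ 2 * (A₁ * p + A₂ * q) + 1 / (2 * (1 / n)) * B * (q - p) =
      n / 2 * (p * (2 * n * A₁ - B) + q * (2 * n * A₂ + B)) := by
    rw [one_div_pow, one_div_one_div, one_div (2 * (1 / n)), mul_inv, one_div, inv_inv]
    ring
  rw [hrw]
  have := add_nonneg (mul_nonneg hp h₁) (mul_nonneg hq h₂)
  positivity

lemma Lh_nonneg_of_isMax {d N : ℕ} {a b : Fin d → (Fin d → ℝ) → ℝ → ℝ} {tm : ℝ}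
    {V : (Fin d → ℕ) → ℝ} {i : Fin d → ℕ} (hi : ∀ k, 1 ≤ i k ∧ i k ≤ N - 1)
    (hpeclet : ∀ k, ∀ x ∈ cube d, ∀ x' ∈ cube d, |b k x tm| ≤ 2 * N * a k x' tm)
    (hmax : ∀ j : Fin d → ℕ, (∀ k, j k ≤ N) → V j ≤ V i) :
    0 ≤ Lh d N a b (fun _ _ => 0) tm V i := by
  have hiN : ∀ k, i k ≤ N := fun k => by have := hi k; omega
  have hx := gridPt_mem_cube hiN
  have hnb : ∀ k (n : ℕ), n ≤ N → ∀ k', Function.update i k n k' ≤ N := fun k n hn k' => by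
    rcases eq_or_ne k' k with rfl | hne
    · rwa [Function.update_self]
    · rw [Function.update_of_ne hne]
      exact hiN k'
  simp only [Lh, zero_mul, add_zero, ← sum_add_distrib]
  refine sum_nonneg fun k _ => ?_
  obtain ⟨hik₁, hik⟩ := hi k
  have hright := update_mem_cube hx k (div_add_half_mem_Icc (i := i k) (N := N) (by omega))
  have hleft := update_mem_cube hx k (div_sub_half_mem_Icc (i := i k) (N := N) (hi k).1 (hiN k))
  have hstencil := stencil_nonneg (Nat.cast_nonneg N) (hpeclet k _ hx _ hright)
    (hpeclet k _ hx _ hleft) (sub_nonneg.2 (hmax _ (hnb k (i k + 1) (by omega))))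
    (sub_nonneg.2 (hmax _ (hnb k (i k - 1) (by omega))))
  rw [show gridPt d N i k = (i k : ℝ) / N from rfl]
  exact hstencil.trans_eq (by ring)

lemma exists_isMax_node (d N : ℕ) (V : (Fin d → ℕ) → ℝ) :
    ∃ i : Fin d → ℕ, (∀ k, i k ≤ N) ∧ ∀ j : Fin d → ℕ, (∀ k, j k ≤ N) → V j ≤ V i := by
  obtain ⟨i, hi⟩ := Finite.exists_max fun i : Fin d → Fin (N + 1) => V fun k => (i k : ℕ)
  exact ⟨fun k => i k, fun k => Nat.lt_succ_iff.1 (i k).isLt,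
    fun j hj => hi fun k => ⟨j k, Nat.lt_succ_of_le (hj k)⟩⟩

lemma deltaL1_neg (α : ℝ) (t V : ℕ → ℝ) (m : ℕ) :
    deltaL1 α t (fun j => -V j) m = -deltaL1 α t V m := by
  simp only [deltaL1, ← mul_neg, ← sum_neg_distrib]
  exact congrArg _ (sum_congr rfl fun j _ => by ring)

lemma Lh_neg (d N : ℕ) (a b : Fin d → (Fin d → ℝ) → ℝ → ℝ) (c : (Fin d → ℝ) → ℝ → ℝ)
    (tm : ℝ) (V : (Fin d → ℕ) → ℝ) (i : Fin d → ℕ) :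
    Lh d N a b c tm (fun j => -V j) i = -Lh d N a b c tm V i := by
  simp only [Lh, neg_add, ← sum_neg_distrib]
  congr 1
  congr 1
  · exact sum_congr rfl fun k _ => by ring
  · exact sum_congr rfl fun k _ => by ring
  · ring

lemma FDScheme.neg {α : ℝ} {d N M : ℕ} {t : ℕ → ℝ} {a b : Fin d → (Fin d → ℝ) → ℝ → ℝ}
    {c : (Fin d → ℝ) → ℝ → ℝ} {f : (Fin d → ℝ) → ℝ → ℝ → ℝ} {u₀ : (Fin d → ℝ) → ℝ}
    {U : ℕ → (Fin d → ℕ) → ℝ} (hU : FDScheme α d N M t a b c f u₀ U) :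
    FDScheme α d N M t a b c (fun x t' s => -f x t' (-s)) (fun x => -u₀ x)
      (fun m i => -U m i) := by
  obtain ⟨hinit, hbdry, heq⟩ := hU
  refine ⟨fun i hi => by simp only [hinit i hi], fun m hm hmM i hi hb => by
    simp only [hbdry m hm hmM i hi hb, neg_zero], fun m hm hmM i hi => ?_⟩
  simp only [deltaL1_neg, Lh_neg, neg_neg]
  linarith [heq m hm hmM i hi]

section MaximumPrinciple

variable {α lam σ : ℝ} {d N M : ℕ} {t : ℕ → ℝ} {a b : Fin d → (Fin d → ℝ) → ℝ → ℝ}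
  {f : (Fin d → ℝ) → ℝ → ℝ → ℝ} {u₀ : (Fin d → ℝ) → ℝ} {U : ℕ → (Fin d → ℕ) → ℝ}

lemma FDScheme.step_le_of_prev_le (hU : FDScheme α d N M t a b (fun _ _ => 0) f u₀ U)
    (hα : α ∈ Set.Ioo 0 1) {m : ℕ} (hm : 1 ≤ m) (hmM : m ≤ M)
    (ht : StrictMonoOn t (Set.Iic m)) (hweight : lam < l1Weight α t m m)
    (hpeclet : ∀ k, ∀ x ∈ cube d, ∀ x' ∈ cube d, |b k x (t m)| ≤ 2 * N * a k x' (t m))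
    (hfA1 : ∀ x s, σ ≤ s → f x (t m) s - f x (t m) σ ≥ -lam * (s - σ))
    (hσ : 0 ≤ σ) (hfσ : ∀ x ∈ cube d, 0 ≤ f x (t m) σ)
    (hprev : ∀ j < m, ∀ i : Fin d → ℕ, (∀ k, i k ≤ N) → U j i ≤ σ) :
    ∀ i : Fin d → ℕ, (∀ k, i k ≤ N) → U m i ≤ σ := by
  obtain ⟨imax, himax, hmax⟩ := exists_isMax_node d N (U m)
  refine fun i hi => (hmax i hi).trans (not_lt.1 fun hgt => ?_)
  have hint : ∀ k, 1 ≤ imax k ∧ imax k ≤ N - 1 := by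
    by_contra! hbdry
    obtain ⟨k, hk⟩ := hbdry
    have hzero := hU.2.1 m hm hmM imax himax ⟨k, by have := himax k; omega⟩
    linarith
  have hδ := l1Weight_mul_sub_le_deltaL1 (c := σ) hα hm ht fun j hj => hprev j hj imax himax
  have hLh := Lh_nonneg_of_isMax (tm := t m) hint hpeclet hmax
  have hf := hfA1 (gridPt d N imax) (U m imax) hgt.le
  have hfσ' := hfσ _ (gridPt_mem_cube himax)
  have hpos : 0 < (l1Weight α t m m - lam) * (U m imax - σ) :=
    mul_pos (by linarith) (by linarith)
  linarith [hU.2.2 m hm hmM imax hint]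

lemma FDScheme.le_of_const_supersolution
    (hU : FDScheme α d N M t a b (fun _ _ => 0) f u₀ U) (hα : α ∈ Set.Ioo 0 1)
    (ht : StrictMonoOn t (Set.Iic M)) (hweight : ∀ m, 1 ≤ m → m ≤ M → lam < l1Weight α t m m)
    (hpeclet : ∀ m, 1 ≤ m → m ≤ M →
      ∀ k, ∀ x ∈ cube d, ∀ x' ∈ cube d, |b k x (t m)| ≤ 2 * N * a k x' (t m))
    (hfA1 : ∀ x t' s₁ s₂, s₂ ≤ s₁ → f x t' s₁ - f x t' s₂ ≥ -lam * (s₁ - s₂))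
    (hσ : 0 ≤ σ) (hfσ : ∀ m, 1 ≤ m → m ≤ M → ∀ x ∈ cube d, 0 ≤ f x (t m) σ)
    (hu₀ : ∀ x ∈ cube d, u₀ x ≤ σ) :
    ∀ m ≤ M, ∀ i : Fin d → ℕ, (∀ k, i k ≤ N) → U m i ≤ σ := by
  intro m
  induction m using Nat.strong_induction_on with
  | _ m ih =>
    intro hmM
    rcases Nat.eq_zero_or_pos m with rfl | hm
    · exact fun i hi => (hU.1 i hi).trans_le (hu₀ _ (gridPt_mem_cube hi))
    · exact hU.step_le_of_prev_le hα hm hmM (ht.mono (Set.Iic_subset_Iic.2 hmM))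
        (hweight m hm hmM) (hpeclet m hm hmM) (fun x s => hfA1 x (t m) s σ) hσ
        (hfσ m hm hmM) fun j hj => ih j hj (by omega)

end MaximumPrinciple

theorem stmt19_general
    (α T lam σ₁ σ₂ : ℝ)
    (hα : α ∈ Set.Ioo (0 : ℝ) 1)
    (d : ℕ)
    (a b : Fin d → (Fin d → ℝ) → ℝ → ℝ)
    (hapos : ∀ k, ∀ x ∈ cube d, ∀ t' ∈ Set.Icc (0 : ℝ) T, 0 < a k x t')
    -- f satisfies assumption A1 with constant lam
    (f : (Fin d → ℝ) → ℝ → ℝ → ℝ)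
    (hfA1 : ∀ x t' s₁ s₂, s₂ ≤ s₁ → f x t' s₁ - f x t' s₂ ≥ -lam * (s₁ - s₂))
    -- assumption A2
    (hσ₁ : σ₁ ≤ 0) (hσ₂ : 0 ≤ σ₂)
    (hfσ₁ : ∀ x ∈ cube d, ∀ t' ∈ Set.Ioc (0 : ℝ) T, f x t' σ₁ ≤ 0)
    (hfσ₂ : ∀ x ∈ cube d, ∀ t' ∈ Set.Ioc (0 : ℝ) T, 0 ≤ f x t' σ₂)
    -- temporal mesh
    (M : ℕ) (t : ℕ → ℝ)
    (ht0 : t 0 = 0) (htM : t M = T)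
    (hmono : ∀ j, j < M → t j < t (j + 1))
    (hmesh : ∀ j, 1 ≤ j → j ≤ M →
      lam * (t j - t (j - 1)) ^ α < 1 / Real.Gamma (2 - α))
    -- spatial mesh and discrete maximum principle condition
    (N : ℕ)
    (hdmp : ∀ k, ∀ x ∈ cube d, ∀ t' ∈ Set.Ioc (0 : ℝ) T,
      ∀ x' ∈ cube d, ∀ t'' ∈ Set.Ioc (0 : ℝ) T,
      (1 / 2) * |b k x t'| * (a k x' t'')⁻¹ ≤ (N : ℝ))
    -- initial condition
    (u₀ : (Fin d → ℝ) → ℝ)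
    (hu₀ : ∀ x ∈ cube d, σ₁ ≤ u₀ x ∧ u₀ x ≤ σ₂)
    -- the discrete solution (with c ≡ 0)
    (U : ℕ → (Fin d → ℕ) → ℝ)
    (hU : FDScheme α d N M t a b (fun _ _ => 0) f u₀ U) :
    ∀ m, m ≤ M → ∀ i : Fin d → ℕ, (∀ k, i k ≤ N) →
      σ₁ ≤ U m i ∧ U m i ≤ σ₂ := by
  have ht : StrictMonoOn t (Set.Iic M) := strictMonoOn_Iic_of_lt_succ hmono
  have htm : ∀ m, 1 ≤ m → m ≤ M → t m ∈ Set.Ioc 0 T := fun m hm hmM =>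
    ⟨ht0 ▸ ht (Set.mem_Iic.2 (Nat.zero_le M)) (Set.mem_Iic.2 hmM) hm,
      htM ▸ ht.monotoneOn (Set.mem_Iic.2 hmM) (Set.mem_Iic.2 le_rfl) hmM⟩
  have hweight : ∀ m, 1 ≤ m → m ≤ M → lam < l1Weight α t m m := fun m hm hmM =>
    lt_l1Weight_self hα.2 (ht (Set.mem_Iic.2 (by omega)) (Set.mem_Iic.2 hmM) (by omega))
      (hmesh m hm hmM)
  have hpeclet : ∀ m, 1 ≤ m → m ≤ M →
      ∀ k, ∀ x ∈ cube d, ∀ x' ∈ cube d, |b k x (t m)| ≤ 2 * N * a k x' (t m) := by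
    intro m hm hmM k x hx x' hx'
    have hdmp' := hdmp k x hx _ (htm m hm hmM) x' hx' _ (htm m hm hmM)
    rw [mul_inv_le_iff₀ (hapos k x' hx' _ (Set.Ioc_subset_Icc_self (htm m hm hmM)))] at hdmp'
    linarith
  have hupper := hU.le_of_const_supersolution hα ht hweight hpeclet hfA1 hσ₂
    (fun m hm hmM x hx => hfσ₂ x hx _ (htm m hm hmM)) fun x hx => (hu₀ x hx).2
  have hlower := hU.neg.le_of_const_supersolution hα ht hweight hpeclet
    (fun x t' s₁ s₂ h => by linarith [hfA1 x t' (-s₂) (-s₁) (by linarith)]) (neg_nonneg.2 hσ₁)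
    (fun m hm hmM x hx => by
      rw [neg_neg]; linarith [hfσ₁ x hx _ (htm m hm hmM)])
    fun x hx => neg_le_neg (hu₀ x hx).1
  exact fun m hm i hi => ⟨neg_le_neg_iff.1 (hlower m hm i hi), hupper m hm i hi⟩

theorem stmt19
    (α T lam σ₁ σ₂ : ℝ)
    (hα : α ∈ Set.Ioo (0 : ℝ) 1) (hT : 0 < T) (hlam : 0 ≤ lam)
    (d : ℕ) (hd : d = 1 ∨ d = 2 ∨ d = 3)
    (a b : Fin d → (Fin d → ℝ) → ℝ → ℝ)
    -- coefficients are continuous on Ω̄ × [0,T], a_k > 0; here c ≡ 0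
    (hacont : ∀ k, ContinuousOn (fun p : (Fin d → ℝ) × ℝ => a k p.1 p.2)
      (cube d ×ˢ Set.Icc 0 T))
    (hbcont : ∀ k, ContinuousOn (fun p : (Fin d → ℝ) × ℝ => b k p.1 p.2)
      (cube d ×ˢ Set.Icc 0 T))
    (hapos : ∀ k, ∀ x ∈ cube d, ∀ t' ∈ Set.Icc (0 : ℝ) T, 0 < a k x t')
    -- f satisfies assumption A1 with constant lam
    (f : (Fin d → ℝ) → ℝ → ℝ → ℝ)
    (hfc : ∀ x t', Continuous fun s => f x t' s)
    (hfbd : ∀ t' s, ∃ K : ℝ, ∀ x ∈ cube d, |f x t' s| ≤ K)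
    (hfA1 : ∀ x t' s₁ s₂, s₂ ≤ s₁ → f x t' s₁ - f x t' s₂ ≥ -lam * (s₁ - s₂))
    -- assumption A2
    (hσ₁ : σ₁ ≤ 0) (hσ₂ : 0 ≤ σ₂)
    (hfσ₁ : ∀ x ∈ cube d, ∀ t' ∈ Set.Ioc (0 : ℝ) T, f x t' σ₁ ≤ 0)
    (hfσ₂ : ∀ x ∈ cube d, ∀ t' ∈ Set.Ioc (0 : ℝ) T, 0 ≤ f x t' σ₂)
    -- temporal mesh
    (M : ℕ) (hM : 1 ≤ M) (t : ℕ → ℝ)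
    (ht0 : t 0 = 0) (htM : t M = T)
    (hmono : ∀ j, j < M → t j < t (j + 1))
    (hmesh : ∀ j, 1 ≤ j → j ≤ M →
      lam * (t j - t (j - 1)) ^ α < 1 / Real.Gamma (2 - α))
    -- spatial mesh and discrete maximum principle condition
    (N : ℕ) (hN : 1 ≤ N)
    (hdmp : ∀ k, ∀ x ∈ cube d, ∀ t' ∈ Set.Ioc (0 : ℝ) T,
      ∀ x' ∈ cube d, ∀ t'' ∈ Set.Ioc (0 : ℝ) T,
      (1 / 2) * |b k x t'| * (a k x' t'')⁻¹ ≤ (N : ℝ))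
    -- initial condition
    (u₀ : (Fin d → ℝ) → ℝ)
    (hu₀ : ∀ x ∈ cube d, σ₁ ≤ u₀ x ∧ u₀ x ≤ σ₂)
    -- the discrete solution (with c ≡ 0)
    (U : ℕ → (Fin d → ℕ) → ℝ)
    (hU : FDScheme α d N M t a b (fun _ _ => 0) f u₀ U) :
    ∀ m, m ≤ M → ∀ i : Fin d → ℕ, (∀ k, i k ≤ N) →
      σ₁ ≤ U m i ∧ U m i ≤ σ₂ :=
  stmt19_general α T lam σ₁ σ₂ hα d a b hapos f hfA1 hσ₁ hσ₂ hfσ₁ hfσ₂ M t ht0 htM hmono hmesh N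
    hdmp u₀ hu₀ U hU
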